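/- Let E be a real Banach space, and let 1 ≤ q_j ≤ p_j < ∞ for j = 1, 2 satisfy p_1 ≤ p_2, q_1 ≤ q_2, and 1/q_1 − 1/p_1 ≤ 1/q_2 − 1/p_2. Then ‖f‖_{p_2,q_2} ≤ ‖f‖_{p_1,q_1} for every f ∈ H[E] (with values in [0,∞]). In particular, H_{p_1,q_1}[E] ⊆ H_{p_2,q_2}[E]. -/

import Mathlib

/-!
Let `xₖ*` have weak `q₂`-norm at most `1` and put `aₖ = |f(xₖ*)|`. Define `t` by
`1/t = 1/p₁ - (1/q₁ - 1/q₂)`; the defect condition says exactly `t ≤ p₂`, so `‖a‖_{p₂} ≤ ‖a‖_t`.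
Rescaling `xₖ*` by `σₖ = wₖ^(1/q₁ - 1/q₂)` with `wₖ = aₖ^t / ∑ aⱼ^t` costs nothing in the weak
`q₁`-norm (Hölder, since `∑ wₖ ≤ 1`), while by homogeneity `f` sends the rescaled family to the
sequence `σₖ aₖ`, whose `ℓ^{p₁}` norm is `‖a‖_t`.
-/

open scoped ENNReal

/-- A function `f : E* → ℝ` is positively homogeneous. -/
def PosHomog {E : Type*} [NormedAddCommGroup E] [NormedSpace ℝ E]
    (f : (E →L[ℝ] ℝ) → ℝ) : Prop :=
  ∀ (c : ℝ), 0 ≤ c → ∀ φ : E →L[ℝ] ℝ, f (c • φ) = c * f φ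

/-- The weak `q`-summing norm of a finite family in `E*`. -/
noncomputable def weakSumNorm {E : Type*} [NormedAddCommGroup E] [NormedSpace ℝ E]
    (q : ℝ) {n : ℕ} (xs : Fin n → (E →L[ℝ] ℝ)) : ℝ :=
  sSup ((fun x : E => (∑ k, |xs k x| ^ q) ^ (1 / q)) '' Metric.closedBall 0 1)

/-- The `(p,q)`-summing norm of `f : E* → ℝ`, with values in `[0,∞]`. -/
noncomputable def pqNorm {E : Type*} [NormedAddCommGroup E] [NormedSpace ℝ E]
    (p q : ℝ) (f : (E →L[ℝ] ℝ) → ℝ) : ℝ≥0∞ :=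
  ⨆ (n : ℕ) (xs : Fin n → (E →L[ℝ] ℝ)) (_ : weakSumNorm q xs ≤ 1),
    ENNReal.ofReal ((∑ k, |f (xs k)| ^ p) ^ (1 / p))

open Finset

section Sums

variable {ι : Type*} (s : Finset ι)

lemma sum_rpow_le_rpow_sum {x : ι → ℝ} (hx : ∀ i ∈ s, 0 ≤ x i) {r : ℝ} (hr : 1 ≤ r) :
    ∑ i ∈ s, x i ^ r ≤ (∑ i ∈ s, x i) ^ r := by
  have hS : 0 ≤ ∑ i ∈ s, x i := sum_nonneg hx
  have hr' : r - 1 + 1 ≠ 0 := by linarith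
  calc ∑ i ∈ s, x i ^ r = ∑ i ∈ s, x i ^ (r - 1) * x i := by
        refine sum_congr rfl fun i hi => ?_
        rw [← Real.rpow_add_one' (hx i hi) hr', sub_add_cancel]
    _ ≤ ∑ i ∈ s, (∑ j ∈ s, x j) ^ (r - 1) * x i :=
        sum_le_sum fun i hi => mul_le_mul_of_nonneg_right
          (Real.rpow_le_rpow (hx i hi) (single_le_sum hx hi) (by linarith)) (hx i hi)
    _ = (∑ i ∈ s, x i) ^ r := by
        rw [← mul_sum, ← Real.rpow_add_one' hS hr', sub_add_cancel]

lemma rpow_sum_rpow_le_rpow_sum_rpow {a : ι → ℝ} (ha : ∀ i ∈ s, 0 ≤ a i) {p t : ℝ}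
    (ht : 0 < t) (htp : t ≤ p) :
    (∑ i ∈ s, a i ^ p) ^ (1 / p) ≤ (∑ i ∈ s, a i ^ t) ^ (1 / t) := by
  have hp : 0 < p := ht.trans_le htp
  have hS : 0 ≤ ∑ i ∈ s, a i ^ t := sum_nonneg fun i hi => Real.rpow_nonneg (ha i hi) t
  calc (∑ i ∈ s, a i ^ p) ^ (1 / p) = (∑ i ∈ s, (a i ^ t) ^ (p / t)) ^ (1 / p) := by
        congr 1
        refine sum_congr rfl fun i hi => ?_
        rw [← Real.rpow_mul (ha i hi), mul_div_cancel₀ p ht.ne']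
    _ ≤ ((∑ i ∈ s, a i ^ t) ^ (p / t)) ^ (1 / p) := by
        gcongr
        · exact sum_nonneg fun i hi => Real.rpow_nonneg (Real.rpow_nonneg (ha i hi) t) _
        · exact sum_rpow_le_rpow_sum s (fun i hi => Real.rpow_nonneg (ha i hi) t)
            ((one_le_div ht).2 htp)
    _ = (∑ i ∈ s, a i ^ t) ^ (1 / t) := by
        rw [← Real.rpow_mul hS]
        field_simp

/-- Hölder's inequality for the exponents `1/(1-θ)` and `1/θ`, in a form that also covers
`θ ∈ {0, 1}`. -/
lemma sum_rpow_mul_rpow_le_one {w c : ι → ℝ} (hw : ∀ i ∈ s, 0 ≤ w i) (hc : ∀ i ∈ s, 0 ≤ c i)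
    {θ : ℝ} (hθ₀ : 0 ≤ θ) (hθ₁ : θ ≤ 1) (hw₁ : ∑ i ∈ s, w i ≤ 1) (hc₁ : ∑ i ∈ s, c i ≤ 1) :
    ∑ i ∈ s, w i ^ (1 - θ) * c i ^ θ ≤ 1 :=
  calc ∑ i ∈ s, w i ^ (1 - θ) * c i ^ θ ≤ ∑ i ∈ s, ((1 - θ) * w i + θ * c i) :=
        sum_le_sum fun i hi => Real.geom_mean_le_arith_mean2_weighted (by linarith) hθ₀
          (hw i hi) (hc i hi) (sub_add_cancel 1 θ)
    _ = (1 - θ) * ∑ i ∈ s, w i + θ * ∑ i ∈ s, c i := by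
        rw [sum_add_distrib, mul_sum, mul_sum]
    _ ≤ 1 := by nlinarith

lemma rpow_sum_rpow_eq_rpow_sum_weight_mul_rpow {a : ι → ℝ} (ha : ∀ i ∈ s, 0 ≤ a i)
    {p t : ℝ} (hp : 0 < p) (ht : 0 < t) (hA : 0 < ∑ i ∈ s, a i ^ t) :
    (∑ i ∈ s, ((a i ^ t / ∑ j ∈ s, a j ^ t) ^ (1 / p - 1 / t) * a i) ^ p) ^ (1 / p) =
      (∑ i ∈ s, a i ^ t) ^ (1 / t) := by
  set A := ∑ i ∈ s, a i ^ t
  set r := 1 / p - 1 / t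
  have hrp : r * p = 1 - p / t := by simp only [r]; field_simp
  have hterm : ∀ i ∈ s, ((a i ^ t / A) ^ r * a i) ^ p = a i ^ t / A ^ (r * p) := by
    intro i hi
    have hai := ha i hi
    have hexp : t * (r * p) + p = t := by rw [hrp]; field_simp; ring
    rw [Real.mul_rpow (by positivity) hai, ← Real.rpow_mul (by positivity),
      Real.div_rpow (by positivity) hA.le, ← Real.rpow_mul hai, div_mul_eq_mul_div,
      ← Real.rpow_add' hai (by rw [hexp]; exact ht.ne'), hexp]
  calc (∑ i ∈ s, ((a i ^ t / A) ^ r * a i) ^ p) ^ (1 / p) = (A / A ^ (r * p)) ^ (1 / p) := by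
        rw [sum_congr rfl hterm, ← sum_div]
    _ = (A ^ (p / t)) ^ (1 / p) := by
        rw [hrp, Real.rpow_sub hA, Real.rpow_one, div_div_cancel₀ hA.ne']
    _ = A ^ (1 / t) := by
        rw [← Real.rpow_mul hA.le]
        field_simp

lemma rpow_sum_rpow_le_rpow_sum_weight_mul_rpow {a : ι → ℝ} (ha : ∀ i ∈ s, 0 ≤ a i)
    {p t : ℝ} (hp : 0 < p) (ht : 0 < t) :
    (∑ i ∈ s, a i ^ t) ^ (1 / t) ≤
      (∑ i ∈ s, ((a i ^ t / ∑ j ∈ s, a j ^ t) ^ (1 / p - 1 / t) * a i) ^ p) ^ (1 / p) := by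
  rcases (sum_nonneg fun i hi => Real.rpow_nonneg (ha i hi) t).eq_or_lt with hA | hA
  · rw [← hA, Real.zero_rpow (one_div_pos.2 ht).ne']
    refine Real.rpow_nonneg (sum_nonneg fun i hi => ?_) _
    have := ha i hi
    positivity
  · exact (rpow_sum_rpow_eq_rpow_sum_weight_mul_rpow s ha hp ht hA).ge

end Sums

section WeakNorm

variable {E : Type*} [NormedAddCommGroup E] [NormedSpace ℝ E]

lemma weakSumNorm_le_one_iff {q : ℝ} (hq : 0 < q) {n : ℕ} (xs : Fin n → (E →L[ℝ] ℝ)) :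
    weakSumNorm q xs ≤ 1 ↔ ∀ x : E, ‖x‖ ≤ 1 → ∑ k, |xs k x| ^ q ≤ 1 := by
  have hsum : ∀ x : E, 0 ≤ ∑ k, |xs k x| ^ q := fun x => by positivity
  have hroot : ∀ x : E, (∑ k, |xs k x| ^ q) ^ (1 / q) ≤ 1 ↔ ∑ k, |xs k x| ^ q ≤ 1 := fun x => by
    rw [one_div, Real.rpow_inv_le_iff_of_pos (hsum x) zero_le_one hq, Real.one_rpow]
  have hbdd : BddAbove ((fun x : E => (∑ k, |xs k x| ^ q) ^ (1 / q)) '' Metric.closedBall 0 1) := by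
    refine ⟨(∑ k, ‖xs k‖ ^ q) ^ (1 / q), ?_⟩
    rintro _ ⟨x, hx, rfl⟩
    rw [mem_closedBall_zero_iff] at hx
    dsimp only
    gcongr with k
    exact (xs k).le_of_opNorm_le_of_le le_rfl hx |>.trans_eq (mul_one _)
  constructor
  · intro h x hx
    exact (hroot x).1 ((le_csSup hbdd ⟨x, mem_closedBall_zero_iff.2 hx, rfl⟩).trans h)
  · intro h
    refine csSup_le ((Metric.nonempty_closedBall.2 zero_le_one).image _) ?_
    rintro _ ⟨x, hx, rfl⟩
    exact (hroot x).2 (h x (mem_closedBall_zero_iff.1 hx))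

lemma weakSumNorm_rpow_smul_le_one {q₁ q₂ : ℝ} (hq₁ : 0 < q₁) (hq : q₁ ≤ q₂) {n : ℕ}
    {xs : Fin n → (E →L[ℝ] ℝ)} (hxs : weakSumNorm q₂ xs ≤ 1) {w : Fin n → ℝ}
    (hw : ∀ k, 0 ≤ w k) (hw₁ : ∑ k, w k ≤ 1) :
    weakSumNorm q₁ (fun k => w k ^ (1 / q₁ - 1 / q₂) • xs k) ≤ 1 := by
  have hq₂ : 0 < q₂ := hq₁.trans_le hq
  rw [weakSumNorm_le_one_iff hq₂] at hxs
  rw [weakSumNorm_le_one_iff hq₁]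
  intro x hx
  have hterm : ∀ k, |(w k ^ (1 / q₁ - 1 / q₂) • xs k) x| ^ q₁ =
      w k ^ (1 - q₁ / q₂) * (|xs k x| ^ q₂) ^ (q₁ / q₂) := fun k => by
    rw [smul_apply, smul_eq_mul, abs_mul,
      abs_of_nonneg (Real.rpow_nonneg (hw k) _),
      Real.mul_rpow (Real.rpow_nonneg (hw k) _) (abs_nonneg _),
      ← Real.rpow_mul (hw k), ← Real.rpow_mul (abs_nonneg _)]
    congr 2 <;> field_simp
  rw [sum_congr rfl fun k _ => hterm k]
  exact sum_rpow_mul_rpow_le_one _ (fun k _ => hw k) (fun k _ => by positivity)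
    (by positivity) ((div_le_one hq₂).2 hq) hw₁ (hxs x hx)

end WeakNorm

lemma le_pqNorm {E : Type*} [NormedAddCommGroup E] [NormedSpace ℝ E] (p q : ℝ)
    (f : (E →L[ℝ] ℝ) → ℝ) {n : ℕ} {xs : Fin n → (E →L[ℝ] ℝ)} (hxs : weakSumNorm q xs ≤ 1) :
    ENNReal.ofReal ((∑ k, |f (xs k)| ^ p) ^ (1 / p)) ≤ pqNorm p q f :=
  le_iSup_of_le n <| le_iSup_of_le xs <| le_iSup_of_le hxs le_rfl

theorem pqNorm_inclusion_general
    (E : Type*) [NormedAddCommGroup E] [NormedSpace ℝ E]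
    (p₁ q₁ p₂ q₂ : ℝ)
    (hq₁ : 1 ≤ q₁) (hqp₁ : q₁ ≤ p₁)
    (hp : p₁ ≤ p₂) (hq : q₁ ≤ q₂)
    (hdefect : 1 / q₁ - 1 / p₁ ≤ 1 / q₂ - 1 / p₂)
    (f : (E →L[ℝ] ℝ) → ℝ) (hf : PosHomog f) :
    pqNorm p₂ q₂ f ≤ pqNorm p₁ q₁ f ∧
      (pqNorm p₁ q₁ f < ⊤ → pqNorm p₂ q₂ f < ⊤) := by
  have hq₁_pos : 0 < q₁ := by linarith
  have hp₁ : 0 < p₁ := by linarith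
  have hp₂ : 0 < p₂ := by linarith
  set t := (1 / p₁ - 1 / q₁ + 1 / q₂)⁻¹
  have ht_inv : 1 / t = 1 / p₁ - 1 / q₁ + 1 / q₂ := by rw [one_div, inv_inv]
  have ht : 0 < t := inv_pos.2 (by linarith [one_div_pos.2 hp₂])
  have htp : t ≤ p₂ := (one_div_le_one_div hp₂ ht).1 (by linarith)
  have hexp : 1 / q₁ - 1 / q₂ = 1 / p₁ - 1 / t := by rw [ht_inv]; ring
  have hmain : pqNorm p₂ q₂ f ≤ pqNorm p₁ q₁ f := by
    refine iSup_le fun n => iSup_le fun xs => iSup_le fun hxs => ?_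
    set a : Fin n → ℝ := fun k => |f (xs k)|
    set w : Fin n → ℝ := fun k => a k ^ t / ∑ j, a j ^ t
    have hw₁ : ∑ k, w k ≤ 1 := by rw [← sum_div]; exact div_self_le_one _
    have hf_smul : ∀ k, |f (w k ^ (1 / q₁ - 1 / q₂) • xs k)| = w k ^ (1 / p₁ - 1 / t) * a k :=
      fun k => by
        rw [hf _ (by positivity), abs_mul, abs_of_nonneg (by positivity), hexp]
    calc ENNReal.ofReal ((∑ k, a k ^ p₂) ^ (1 / p₂))
        ≤ ENNReal.ofReal ((∑ k, a k ^ t) ^ (1 / t)) := by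
          gcongr
          exact rpow_sum_rpow_le_rpow_sum_rpow _ (fun k _ => abs_nonneg _) ht htp
      _ ≤ ENNReal.ofReal ((∑ k, |f (w k ^ (1 / q₁ - 1 / q₂) • xs k)| ^ p₁) ^ (1 / p₁)) := by
          gcongr
          simp only [hf_smul]
          exact rpow_sum_rpow_le_rpow_sum_weight_mul_rpow _ (fun k _ => abs_nonneg _) hp₁ ht
      _ ≤ pqNorm p₁ q₁ f :=
          le_pqNorm p₁ q₁ f (weakSumNorm_rpow_smul_le_one hq₁_pos hq hxs (fun k => by positivity) hw₁)
  exact ⟨hmain, hmain.trans_lt⟩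

/-- Inclusion lemma. If `1 ≤ q_j ≤ p_j < ∞` for `j = 1,2` with
`p₁ ≤ p₂`, `q₁ ≤ q₂` and `1/q₁ − 1/p₁ ≤ 1/q₂ − 1/p₂`, then
`‖f‖_{p₂,q₂} ≤ ‖f‖_{p₁,q₁}` for every `f ∈ H[E]` (values in `[0,∞]`); in particular
`H_{p₁,q₁}[E] ⊆ H_{p₂,q₂}[E]`. -/
theorem pqNorm_inclusion
    (E : Type*) [NormedAddCommGroup E] [NormedSpace ℝ E] [CompleteSpace E]
    (p₁ q₁ p₂ q₂ : ℝ)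
    (hq₁ : 1 ≤ q₁) (hqp₁ : q₁ ≤ p₁) (hq₂ : 1 ≤ q₂) (hqp₂ : q₂ ≤ p₂)
    (hp : p₁ ≤ p₂) (hq : q₁ ≤ q₂)
    (hdefect : 1 / q₁ - 1 / p₁ ≤ 1 / q₂ - 1 / p₂)
    (f : (E →L[ℝ] ℝ) → ℝ) (hf : PosHomog f) :
    pqNorm p₂ q₂ f ≤ pqNorm p₁ q₁ f ∧
      (pqNorm p₁ q₁ f < ⊤ → pqNorm p₂ q₂ f < ⊤) :=
  pqNorm_inclusion_general E p₁ q₁ p₂ q₂ hq₁ hqp₁ hp hq hdefect f hf
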